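/- arXiv:1806.09240 — 9 statements merged into one kernel-verified Lean document; each statement's English description precedes it below -/
import Mathlib

section
/- Let n ≥ 2 and let v = (v_1, ..., v_{n-1}) be a strictly increasing vector of positive integers. Let r and s be positive integers with r + s - 2 ≤ n - 1, and let x = (x_1, ..., x_s) be a binary vector. Define g_v(r, x) = x_1·v_r - x_s·v_{r+s-2} + Σ_{t=2}^{s-1} x_t·(v_{t+r-1} - v_{t+r-2}). If g_v(r, x) = 0, then x is a constant vector (all zeros or all ones). -/
/-!
Summation by parts rewrites `g_v(r, x)` as `∑ x_t c_t - x_s ∑ c_t`, where `c_1 = v_r` and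
`c_t = v_{t+r-1} - v_{t+r-2}` are positive. So `g_v(r, x) = 0` says that the `c`-weighted average
of `x_1, …, x_{s-1}` equals `x_s ∈ {0, 1}`, an extreme value, which forces every `x_t = x_s`.
-/

def gfun (v : ℕ → ℤ) (r s : ℕ) (x : ℕ → ℤ) : ℤ :=
  x 1 * v r - x s * v (r + s - 2) +
    ∑ t ∈ Finset.Icc 2 (s - 1), x t * (v (t + r - 1) - v (t + r - 2))

open Finset

section WeightedSum

variable {ι R : Type*} [Ring R] [LinearOrder R] [IsStrictOrderedRing R]
  {S : Finset ι} {c y : ι → R}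

lemma eq_zero_of_sum_mul_eq_zero (hc : ∀ i ∈ S, 0 < c i) (hy : ∀ i ∈ S, 0 ≤ y i)
    (h : ∑ i ∈ S, y i * c i = 0) : ∀ i ∈ S, y i = 0 := by
  intro i hi
  have hyc := (sum_eq_zero_iff_of_nonneg fun j hj => mul_nonneg (hy j hj) (hc j hj).le).1 h i hi
  exact (mul_eq_zero.1 hyc).resolve_right (hc i hi).ne'

lemma eq_of_sum_mul_eq_mul_sum {b : R} (hc : ∀ i ∈ S, 0 < c i)
    (hy : ∀ i ∈ S, y i = 0 ∨ y i = 1) (hb : b = 0 ∨ b = 1)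
    (h : ∑ i ∈ S, y i * c i = b * ∑ i ∈ S, c i) : ∀ i ∈ S, y i = b := by
  rcases hb with rfl | rfl
  · refine eq_zero_of_sum_mul_eq_zero hc (fun i hi => ?_) (by rw [h, zero_mul])
    rcases hy i hi with h' | h' <;> simp [h']
  · have hsum : ∑ i ∈ S, (1 - y i) * c i = 0 := by
      simp only [sub_mul, one_mul, sum_sub_distrib, h, sub_self]
    refine fun i hi =>
      (sub_eq_zero.1 (eq_zero_of_sum_mul_eq_zero hc (fun j hj => ?_) hsum i hi)).symm
    rcases hy j hj with h' | h' <;> simp [h']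

end WeightedSum

/-- `gapWeights v r i` is the weight `c_{i+1}` above: the increments of `v` from index `r - 1` on,
with `v (r - 1)` read as `0`. -/
def gapWeights (v : ℕ → ℤ) (r : ℕ) : ℕ → ℤ
  | 0 => v r
  | i + 1 => v (r + i + 1) - v (r + i)

lemma sum_range_gapWeights (v : ℕ → ℤ) (r m : ℕ) :
    ∑ i ∈ range (m + 1), gapWeights v r i = v (r + m) := by
  have htele := sum_range_sub (fun i => v (r + i)) m
  simp only [← add_assoc, add_zero] at htele
  rw [sum_range_succ']
  simp only [gapWeights]
  rw [htele, sub_add_cancel]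

lemma gapWeights_pos {v : ℕ → ℤ} {r m : ℕ} (h0 : 0 < v r)
    (hmono : ∀ i, i < m → v (r + i) < v (r + i + 1)) :
    ∀ i ∈ range (m + 1), 0 < gapWeights v r i := by
  rintro (_ | i) hi
  · exact h0
  · exact sub_pos.2 (hmono i (by simpa using hi))

lemma gfun_eq_sum_gapWeights (v x : ℕ → ℤ) (r m : ℕ) :
    gfun v r (m + 2) x =
      ∑ i ∈ range (m + 1), x (i + 1) * gapWeights v r i - x (m + 2) * v (r + m) := by
  rw [gfun, sum_range_succ', show m + 2 - 1 = m + 1 by omega, ← Ico_add_one_right_eq_Icc,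
    sum_Ico_eq_sum_range, show r + (m + 2) - 2 = r + m by omega, show m + 1 + 1 - 2 = m by omega]
  have hterm : ∀ k, x (2 + k) * (v (2 + k + r - 1) - v (2 + k + r - 2)) =
      x (k + 1 + 1) * (v (r + k + 1) - v (r + k)) := fun k => by
    rw [show 2 + k + r - 1 = r + k + 1 by omega, show 2 + k + r - 2 = r + k by omega,
      show 2 + k = k + 1 + 1 by omega]
  simp only [gapWeights, hterm]
  ring

theorem stmt0_general (n r s : ℕ) (v x : ℕ → ℤ)
    (hr : 1 ≤ r) (hs : 1 ≤ s) (hrs : r + s - 2 ≤ n - 1)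
    (hpos : ∀ i, 1 ≤ i → i ≤ n - 1 → 0 < v i)
    (hinc : ∀ i j, 1 ≤ i → i < j → j ≤ n - 1 → v i < v j)
    (hbin : ∀ t, 1 ≤ t → t ≤ s → x t = 0 ∨ x t = 1)
    (hg : gfun v r s x = 0) :
    (∀ t, 1 ≤ t → t ≤ s → x t = 0) ∨ (∀ t, 1 ≤ t → t ≤ s → x t = 1) := by
  suffices hconst : ∀ t, 1 ≤ t → t ≤ s → x t = x s by
    rcases hbin s hs le_rfl with h | h
    · exact .inl fun t ht hts => (hconst t ht hts).trans h
    · exact .inr fun t ht hts => (hconst t ht hts).trans h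
  rcases Nat.lt_or_ge s 2 with hs1 | hs2
  · intro t ht hts
    rw [show t = s by omega]
  obtain ⟨m, rfl⟩ : ∃ m, s = m + 2 := ⟨s - 2, by omega⟩
  have hweights := gapWeights_pos (m := m) (hpos r hr (by omega))
    (fun i (hi : i < m) => hinc (r + i) (r + i + 1) (by omega) (by omega) (by omega))
  have hsum : ∑ i ∈ range (m + 1), x (i + 1) * gapWeights v r i =
      x (m + 2) * ∑ i ∈ range (m + 1), gapWeights v r i := by
    rw [sum_range_gapWeights, ← sub_eq_zero, ← gfun_eq_sum_gapWeights, hg]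
  have hxbin : ∀ i ∈ range (m + 1), x (i + 1) = 0 ∨ x (i + 1) = 1 := fun i hi =>
    hbin (i + 1) (by omega) (by rw [mem_range] at hi; omega)
  intro t ht hts
  rcases hts.eq_or_lt with rfl | hts
  · rfl
  obtain ⟨i, rfl⟩ : ∃ i, t = i + 1 := ⟨t - 1, by omega⟩
  exact eq_of_sum_mul_eq_mul_sum hweights hxbin (hbin (m + 2) (by omega) le_rfl) hsum i
    (mem_range.2 (by omega))

theorem stmt0 (n r s : ℕ) (v x : ℕ → ℤ)
    (hn : 2 ≤ n) (hr : 1 ≤ r) (hs : 1 ≤ s) (hrs : r + s - 2 ≤ n - 1)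
    (hpos : ∀ i, 1 ≤ i → i ≤ n - 1 → 0 < v i)
    (hinc : ∀ i j, 1 ≤ i → i < j → j ≤ n - 1 → v i < v j)
    (hbin : ∀ t, 1 ≤ t → t ≤ s → x t = 0 ∨ x t = 1)
    (hg : gfun v r s x = 0) :
    (∀ t, 1 ≤ t → t ≤ s → x t = 0) ∨ (∀ t, 1 ≤ t → t ≤ s → x t = 1) :=
  stmt0_general n r s v x hr hs hrs hpos hinc hbin hg
end

section
/- Let v ∈ ℤ_+^{n-1} be strictly increasing, r + s - 2 ≤ n - 1, and x a binary vector of length s with x_s = 1. Then g_v(r, x) ≤ 0, with equality if and only if x is the all-ones vector. -/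
open Finset

def gfunWeight (v : ℕ → ℤ) (r t : ℕ) : ℤ :=
  if t = 1 then v r else v (t + r - 1) - v (t + r - 2)

theorem sum_Icc_two_sub_eq {G : Type*} [AddCommGroup G] (v : ℕ → G) (r m : ℕ) :
    ∑ t ∈ Icc 2 (m + 1), (v (t + r - 1) - v (t + r - 2)) = v (r + m) - v r := by
  induction m with
  | zero => simp
  | succ m ih =>
    rw [sum_Icc_succ_top (by omega), ih, show m + 1 + 1 + r - 1 = r + (m + 1) by omega,
      show m + 1 + 1 + r - 2 = r + m by omega]
    abel

theorem gfun_eq_sum_gfunWeight (v x : ℕ → ℤ) {r s : ℕ} (hs : 2 ≤ s) (hxs : x s = 1) :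
    gfun v r s x = ∑ t ∈ Icc 1 (s - 1), (x t - 1) * gfunWeight v r t := by
  obtain ⟨m, rfl⟩ : ∃ m, s = m + 2 := ⟨s - 2, by omega⟩
  have hsum : ∑ t ∈ Icc 2 (m + 1), (x t - 1) * gfunWeight v r t
      = ∑ t ∈ Icc 2 (m + 1), (x t - 1) * (v (t + r - 1) - v (t + r - 2)) :=
    sum_congr rfl fun t ht => by rw [gfunWeight, if_neg (by grind)]
  rw [show m + 2 - 1 = m + 1 by omega, ← add_sum_Ioc_eq_sum_Icc (by omega),
    ← Icc_add_one_left_eq_Ioc, show (1 : ℕ) + 1 = 2 from rfl, hsum]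
  simp only [gfun, gfunWeight, if_pos, hxs, show m + 2 - 1 = m + 1 by omega,
    show r + (m + 2) - 2 = r + m by omega]
  rw [← sub_add_cancel (v (r + m)) (v r), ← sum_Icc_two_sub_eq v r m]
  simp only [sub_one_mul, sum_sub_distrib]
  ring

theorem gfunWeight_pos {v : ℕ → ℤ} {r t N : ℕ} (hvr : 0 < v r)
    (hv : StrictMonoOn v (Set.Icc 1 N)) (hr : 1 ≤ r) (ht : 1 ≤ t) (htN : t + r - 1 ≤ N) :
    0 < gfunWeight v r t := by
  unfold gfunWeight
  split_ifs with ht1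
  · exact hvr
  · exact sub_pos.2 <| hv ⟨by omega, by omega⟩ ⟨by omega, htN⟩ (by omega)

theorem stmt3_general (n r s : ℕ) (v x : ℕ → ℤ)
    (hr : 1 ≤ r) (hs : 2 ≤ s) (hrs : r + s - 2 ≤ n - 1)
    (hpos : ∀ i, 1 ≤ i → i ≤ n - 1 → 0 < v i)
    (hinc : ∀ i j, 1 ≤ i → i < j → j ≤ n - 1 → v i < v j)
    (hbin : ∀ t, 1 ≤ t → t ≤ s → x t = 0 ∨ x t = 1)
    (hxs : x s = 1) :
    gfun v r s x ≤ 0 ∧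
      (gfun v r s x = 0 ↔ ∀ t, 1 ≤ t → t ≤ s → x t = 1) := by
  have hmono : StrictMonoOn v (Set.Icc 1 (n - 1)) := fun i hi j hj hij => hinc i j hi.1 hij hj.2
  have hweight : ∀ t ∈ Icc 1 (s - 1), 0 < gfunWeight v r t := fun t ht =>
    gfunWeight_pos (hpos r hr (by omega)) hmono hr (mem_Icc.1 ht).1 (by grind)
  have hterm : ∀ t ∈ Icc 1 (s - 1), (x t - 1) * gfunWeight v r t ≤ 0 := fun t ht => by
    have hxt : x t ≤ 1 := by rcases hbin t (mem_Icc.1 ht).1 (by grind) with h | h <;> omega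
    exact mul_nonpos_of_nonpos_of_nonneg (sub_nonpos.2 hxt) (hweight t ht).le
  have hzero : ∀ t ∈ Icc 1 (s - 1), (x t - 1) * gfunWeight v r t = 0 ↔ x t = 1 := fun t ht => by
    simp [(hweight t ht).ne', sub_eq_zero]
  rw [gfun_eq_sum_gfunWeight v x hs hxs, sum_eq_zero_iff_of_nonpos hterm]
  refine ⟨sum_nonpos hterm, fun h t ht hts => ?_, fun h t ht => ?_⟩
  · rcases hts.eq_or_lt with rfl | hlt
    · exact hxs
    · exact (hzero t (by grind)).1 (h t (by grind))
  · exact (hzero t ht).2 (h t (mem_Icc.1 ht).1 (by grind))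

theorem stmt3 (n r s : ℕ) (v x : ℕ → ℤ)
    (hn : 2 ≤ n) (hr : 1 ≤ r) (hs : 2 ≤ s) (hrs : r + s - 2 ≤ n - 1)
    (hpos : ∀ i, 1 ≤ i → i ≤ n - 1 → 0 < v i)
    (hinc : ∀ i j, 1 ≤ i → i < j → j ≤ n - 1 → v i < v j)
    (hbin : ∀ t, 1 ≤ t → t ≤ s → x t = 0 ∨ x t = 1)
    (hxs : x s = 1) :
    gfun v r s x ≤ 0 ∧
      (gfun v r s x = 0 ↔ ∀ t, 1 ≤ t → t ≤ s → x t = 1) :=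
  stmt3_general n r s v x hr hs hrs hpos hinc hbin hxs
end

section
/- Let S_1, S_2, S_3 be finite sets of positive integers such that every element of S_1 is strictly smaller than every element of S_2, and every element of S_2 is strictly smaller than every element of S_3. If |S_1| - |S_2| + |S_3| = 0, Σ_{t∈S_1} t - Σ_{t∈S_2} t + Σ_{t∈S_3} t = 0, and Σ_{t∈S_1} t² - Σ_{t∈S_2} t² + Σ_{t∈S_3} t² = 0, then S_1, S_2, and S_3 are all empty. -/
/-!
Choose a quadratic polynomial `p` that is positive on `S₁` and `S₃` and negative on `S₂`:
`p t = (2t - 2m + 1)(2t - 2M - 1)`, where `[m, M]` is the range of `S₂`, or `p = 1` if `S₂ = ∅`.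
The three hypotheses say that the signed moments of orders `0, 1, 2` vanish, hence so does
`∑_{S₁} p - ∑_{S₂} p + ∑_{S₃} p`; but each of the three terms has a sign, and is nonzero
unless its set is empty.
-/

open Finset

theorem Finset.eq_empty_of_sum_sub_sum_add_sum_eq_zero {α R : Type*}
    [AddCommGroup R] [PartialOrder R] [IsOrderedAddMonoid R]
    {S₁ S₂ S₃ : Finset α} {f : α → R}
    (h₁ : ∀ t ∈ S₁, 0 < f t) (h₂ : ∀ t ∈ S₂, f t < 0) (h₃ : ∀ t ∈ S₃, 0 < f t)
    (h : ∑ t ∈ S₁, f t - ∑ t ∈ S₂, f t + ∑ t ∈ S₃, f t = 0) :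
    S₁ = ∅ ∧ S₂ = ∅ ∧ S₃ = ∅ := by
  have hS₂ : ∀ t ∈ S₂, 0 < -f t := fun t ht => neg_pos.2 (h₂ t ht)
  rw [sub_eq_add_neg, ← sum_neg_distrib] at h
  have eq_empty {S : Finset α} {g : α → R} (hg : ∀ t ∈ S, 0 < g t) (hsum : ∑ t ∈ S, g t ≤ 0) :
      S = ∅ := by
    by_contra hS
    exact (sum_pos hg (nonempty_iff_ne_empty.2 hS)).not_ge hsum
  have n₁ := sum_nonneg fun t ht => (h₁ t ht).le
  have n₂ := sum_nonneg fun t ht => (hS₂ t ht).le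
  have n₃ := sum_nonneg fun t ht => (h₃ t ht).le
  refine ⟨eq_empty h₁ ?_, eq_empty hS₂ ?_, eq_empty h₃ ?_⟩
  · calc _ ≤ _ := le_add_of_nonneg_right n₂
      _ ≤ _ := le_add_of_nonneg_right n₃
      _ = 0 := h
  · calc _ ≤ _ := le_add_of_nonneg_left n₁
      _ ≤ _ := le_add_of_nonneg_right n₃
      _ = 0 := h
  · calc _ ≤ _ := le_add_of_nonneg_left (add_nonneg n₁ n₂)
      _ = 0 := h

theorem Finset.sum_quadratic {ι R : Type*} [CommSemiring R] (S : Finset ι) (x : ι → R)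
    (a b c : R) :
    ∑ t ∈ S, (a * x t ^ 2 + b * x t + c)
      = a * ∑ t ∈ S, x t ^ 2 + b * ∑ t ∈ S, x t + c * #S := by
  rw [sum_add_distrib, sum_add_distrib, ← mul_sum, ← mul_sum, sum_const, nsmul_eq_mul]
  ring

theorem exists_quadratic_pos_neg_pos {S₁ S₂ S₃ : Finset ℕ}
    (h₁₂ : ∀ a ∈ S₁, ∀ b ∈ S₂, a < b) (h₂₃ : ∀ b ∈ S₂, ∀ c ∈ S₃, b < c) :
    ∃ a b c : ℤ, (∀ t ∈ S₁, 0 < a * (t : ℤ) ^ 2 + b * t + c) ∧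
      (∀ t ∈ S₂, a * (t : ℤ) ^ 2 + b * t + c < 0) ∧
      (∀ t ∈ S₃, 0 < a * (t : ℤ) ^ 2 + b * t + c) := by
  rcases S₂.eq_empty_or_nonempty with rfl | hS₂
  · exact ⟨0, 0, 1, by simp, by simp, by simp⟩
  set m := S₂.min' hS₂
  set M := S₂.max' hS₂
  have factor (t : ℤ) : 4 * t ^ 2 + (-4 * (m + M : ℤ)) * t + (2 * m - 1) * (2 * M + 1)
      = (2 * t - 2 * m + 1) * (2 * t - 2 * M - 1) := by ring
  have hmM : m ≤ M := S₂.min'_le_max' hS₂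
  refine ⟨4, -4 * (m + M : ℤ), (2 * m - 1) * (2 * M + 1), fun t ht => ?_, fun t ht => ?_,
    fun t ht => ?_⟩ <;> rw [factor]
  · have : t < m := h₁₂ t ht _ (S₂.min'_mem hS₂)
    exact mul_pos_of_neg_of_neg (by omega) (by omega)
  · have : m ≤ t := S₂.min'_le t ht
    have : t ≤ M := S₂.le_max' t ht
    exact mul_neg_of_pos_of_neg (by omega) (by omega)
  · have : M < t := h₂₃ _ (S₂.max'_mem hS₂) t ht
    exact mul_pos (by omega) (by omega)

theorem stmt7_general (S1 S2 S3 : Finset ℕ)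
    (h12 : ∀ a ∈ S1, ∀ b ∈ S2, a < b)
    (h23 : ∀ b ∈ S2, ∀ c ∈ S3, b < c)
    (hcard : (S1.card : ℤ) - (S2.card : ℤ) + (S3.card : ℤ) = 0)
    (hsum : (∑ t ∈ S1, (t : ℤ)) - (∑ t ∈ S2, (t : ℤ)) + (∑ t ∈ S3, (t : ℤ)) = 0)
    (hsq : (∑ t ∈ S1, (t : ℤ) ^ 2) - (∑ t ∈ S2, (t : ℤ) ^ 2) +
      (∑ t ∈ S3, (t : ℤ) ^ 2) = 0) :
    S1 = ∅ ∧ S2 = ∅ ∧ S3 = ∅ := by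
  obtain ⟨a, b, c, h1, h2, h3⟩ := exists_quadratic_pos_neg_pos h12 h23
  refine eq_empty_of_sum_sub_sum_add_sum_eq_zero h1 h2 h3 ?_
  simp only [sum_quadratic]
  linear_combination a * hsq + b * hsum + c * hcard

theorem stmt7 (S1 S2 S3 : Finset ℕ)
    (hp1 : ∀ a ∈ S1, 0 < a) (hp2 : ∀ a ∈ S2, 0 < a) (hp3 : ∀ a ∈ S3, 0 < a)
    (h12 : ∀ a ∈ S1, ∀ b ∈ S2, a < b)
    (h23 : ∀ b ∈ S2, ∀ c ∈ S3, b < c)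
    (hcard : (S1.card : ℤ) - (S2.card : ℤ) + (S3.card : ℤ) = 0)
    (hsum : (∑ t ∈ S1, (t : ℤ)) - (∑ t ∈ S2, (t : ℤ)) + (∑ t ∈ S3, (t : ℤ)) = 0)
    (hsq : (∑ t ∈ S1, (t : ℤ) ^ 2) - (∑ t ∈ S2, (t : ℤ) ^ 2) +
      (∑ t ∈ S3, (t : ℤ) ^ 2) = 0) :
    S1 = ∅ ∧ S2 = ∅ ∧ S3 = ∅ :=
  stmt7_general S1 S2 S3 h12 h23 hcard hsum hsq
end

section
/- If a binary sequence d of length n-1 is obtained from a binary sequence c of length n by deleting one symbol, then 𝟙_{10}(d) (of length n-2) can be obtained from 𝟙_{10}(c) (of length n-1) by deleting one symbol, and likewise 𝟙_{01}(d) is obtained from 𝟙_{01}(c) by one deletion. -/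
/-!
Deleting the symbol `x` from `… a x b …` replaces the two adjacent pairs `(a, x), (x, b)` by the
single pair `(a, b)` and leaves every other adjacent pair in place; deleting the first or the last
symbol just drops the first or the last pair. For both indicators the value on `(a, b)` equals the
value on `(a, x)` or on `(x, b)`, so one of these two entries of the indicator sequence can be
deleted to obtain the other one.
-/

def ind10 (c : List Bool) : List Bool := List.zipWith (fun a b => a && !b) c c.tail

def ind01 (c : List Bool) : List Bool := List.zipWith (fun a b => !a && b) c c.tail

namespace List

variable {α β : Type*} (f : α → α → β)

def mapAdjacent (l : List α) : List β := zipWith f l l.tail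

@[simp]
theorem mapAdjacent_nil : mapAdjacent f [] = [] := rfl

@[simp]
theorem mapAdjacent_singleton (a : α) : mapAdjacent f [a] = [] := rfl

@[simp]
theorem mapAdjacent_cons_cons (a b : α) (l : List α) :
    mapAdjacent f (a :: b :: l) = f a b :: mapAdjacent f (b :: l) := rfl

theorem mapAdjacent_sublist_cons (a : α) (l : List α) :
    (mapAdjacent f l).Sublist (mapAdjacent f (a :: l)) := by
  cases l with
  | nil => simp
  | cons b l => simp

variable {f}

theorem mapAdjacent_cons_sublist_cons_cons (hf : ∀ a x b, f a b = f a x ∨ f a b = f x b)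
    (a x : α) (l : List α) :
    (mapAdjacent f (a :: l)).Sublist (mapAdjacent f (a :: x :: l)) := by
  cases l with
  | nil => simp
  | cons b l =>
    simp only [mapAdjacent_cons_cons]
    rcases hf a x b with h | h <;> rw [h]
    · exact ((Sublist.refl _).cons _).cons_cons _
    · exact ((Sublist.refl _).cons_cons _).cons _

theorem mapAdjacent_sublist_of_sublist (hf : ∀ a x b, f a b = f a x ∨ f a b = f x b)
    {d c : List α} (hsub : d.Sublist c) (hlen : c.length ≤ d.length + 1) :
    (mapAdjacent f d).Sublist (mapAdjacent f c) := by
  induction hsub with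
  | slnil => exact Sublist.refl _
  | @cons d c a hsub _ =>
    obtain rfl : d = c := hsub.eq_of_length_le (by simpa using hlen)
    exact mapAdjacent_sublist_cons f a d
  | @cons_cons d c a hsub ih =>
    cases d with
    | nil => simp
    | cons b d =>
      cases c with
      | nil => simp at hsub
      | cons x c =>
        rcases cons_sublist_cons'.mp hsub with hsub' | ⟨rfl, -⟩
        · obtain rfl : b :: d = c := hsub'.eq_of_length_le (by simpa using hlen)
          exact mapAdjacent_cons_sublist_cons_cons hf a x (b :: d)
        · simp only [mapAdjacent_cons_cons]
          exact (ih (by simpa using hlen)).cons_cons _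

end List

theorem stmt10_general (n : ℕ) (c d : List Bool)
    (hc : c.length = n) (hd : d.length = n - 1) (hsub : d.Sublist c) :
    (ind10 d).Sublist (ind10 c) ∧ (ind01 d).Sublist (ind01 c) := by
  have hlen : c.length ≤ d.length + 1 := by omega
  exact ⟨List.mapAdjacent_sublist_of_sublist (by decide) hsub hlen,
    List.mapAdjacent_sublist_of_sublist (by decide) hsub hlen⟩

theorem stmt10 (n : ℕ) (c d : List Bool) (hn : 1 ≤ n)
    (hc : c.length = n) (hd : d.length = n - 1) (hsub : d.Sublist c) :
    (ind10 d).Sublist (ind10 c) ∧ (ind01 d).Sublist (ind01 c) :=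
  stmt10_general n c d hc hd hsub
end

section
/- Let c, c' ∈ {0,1}^n share a common subsequence of length n-2 (i.e., c ∈ B_2(c')). Then 𝟙_{10}(c) and 𝟙_{10}(c') share a common subsequence of length n-3, and likewise 𝟙_{01}(c) and 𝟙_{01}(c') share a common subsequence of length n-3. -/
namespace List

variable {α β : Type*}

def adjMap (f : α → α → β) (l : List α) : List β :=
  zipWith f l l.tail

def ShortcutStable (f : α → α → β) : Prop :=
  ∀ a b w, f a w = f a b ∨ f a w = f b w

variable {f : α → α → β}

@[simp]
lemma adjMap_cons_cons (a b : α) (l : List α) :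
    adjMap f (a :: b :: l) = f a b :: adjMap f (b :: l) := rfl

@[simp]
lemma length_adjMap (l : List α) : (adjMap f l).length = l.length - 1 := by
  simp [adjMap]

lemma adjMap_sublist_adjMap_cons (b : α) (l : List α) :
    adjMap f l <+ adjMap f (b :: l) := by
  cases l with
  | nil => simp [adjMap]
  | cons w t => exact (Sublist.refl _).cons _

lemma Sublist.adjMap_cons (hf : ShortcutStable f) {e l : List α} (h : e <+ l) (a : α) :
    adjMap f (a :: e) <+ adjMap f (a :: l) := by
  induction h generalizing a with
  | slnil => simp [adjMap]
  | @cons e l b _ ih =>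
    cases e with
    | nil => simp [adjMap]
    | cons w e =>
      rw [adjMap_cons_cons, adjMap_cons_cons]
      rcases hf a b w with hab | hbw
      · rw [hab]
        exact ((adjMap_sublist_adjMap_cons b _).trans (ih b)).cons_cons _
      · rw [hbw]
        exact (ih b).cons _
  | cons_cons b _ ih => exact (ih b).cons_cons _

lemma Sublist.adjMap (hf : ShortcutStable f) {e l : List α} (h : e <+ l) :
    adjMap f e <+ adjMap f l := by
  induction h with
  | slnil => exact Sublist.slnil
  | cons b _ ih => exact ih.trans (adjMap_sublist_adjMap_cons b _)
  | cons_cons a h _ => exact h.adjMap_cons hf a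

end List

open List

theorem stmt11_general (n : ℕ) (c c' : List Bool)
    (h : ∃ e : List Bool, e.length = n - 2 ∧ e.Sublist c ∧ e.Sublist c') :
    (∃ s : List Bool, s.length = n - 3 ∧ s.Sublist (ind10 c) ∧ s.Sublist (ind10 c')) ∧
    (∃ s : List Bool, s.length = n - 3 ∧ s.Sublist (ind01 c) ∧ s.Sublist (ind01 c')) := by
  obtain ⟨e, he, hc, hc'⟩ := h
  have hlen : e.length - 1 = n - 3 := by omega
  have h10 : ShortcutStable fun a b : Bool => a && !b := by
    unfold ShortcutStable; decide
  have h01 : ShortcutStable fun a b : Bool => !a && b := by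
    unfold ShortcutStable; decide
  exact ⟨⟨adjMap _ e, by simp [hlen], hc.adjMap h10, hc'.adjMap h10⟩,
    ⟨adjMap _ e, by simp [hlen], hc.adjMap h01, hc'.adjMap h01⟩⟩

theorem stmt11 (n : ℕ) (c c' : List Bool)
    (hc : c.length = n) (hc' : c'.length = n)
    (h : ∃ e : List Bool, e.length = n - 2 ∧ e.Sublist c ∧ e.Sublist c') :
    (∃ s : List Bool, s.length = n - 3 ∧ s.Sublist (ind10 c) ∧ s.Sublist (ind10 c')) ∧
    (∃ s : List Bool, s.length = n - 3 ∧ s.Sublist (ind01 c) ∧ s.Sublist (ind01 c')) :=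
  stmt11_general n c c' h
end

section
/- Let c, c' ∈ {0,1}^n share a common subsequence of length n-2. Let w(c) denote the number of ones in 𝟙_{01}(c). If w(c) ≡ w(c') (mod 3), then w(c) = w(c'). -/
/-!
The number `count01 c` of adjacent `01` pairs in `c` is monotone under taking subsequences,
and inserting a single letter raises it by at most one. So if `e` of length `n - 2` is a common
subsequence of `c` and `c'`, both `count01 c` and `count01 c'` lie in `[count01 e, count01 e + 2]`;
two numbers that close and congruent modulo `3` are equal.
-/

namespace List

def count01 (l : List Bool) : ℕ := (ind01 l).count true

@[simp]
theorem count01_nil : count01 [] = 0 := rfl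

@[simp]
theorem count01_singleton (a : Bool) : count01 [a] = 0 := rfl

theorem count01_cons_cons (a b : Bool) (l : List Bool) :
    count01 (a :: b :: l) = (!a && b).toNat + count01 (b :: l) := by
  cases a <;> cases b <;> simp [count01, ind01, Nat.add_comm]

theorem count01_true_cons (l : List Bool) : count01 (true :: l) = count01 l := by
  cases l with
  | nil => rfl
  | cons b l => simp [count01_cons_cons]

theorem count01_cons_le_cons_cons (a b : Bool) (l : List Bool) :
    count01 (a :: l) ≤ count01 (a :: b :: l) := by
  cases l with
  | nil => simp
  | cons h l => cases a <;> cases b <;> cases h <;> simp [count01_cons_cons]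

theorem count01_cons_cons_le_cons_add_one (a b : Bool) (l : List Bool) :
    count01 (a :: b :: l) ≤ count01 (a :: l) + 1 := by
  cases l with
  | nil => cases a <;> cases b <;> simp [count01_cons_cons]
  | cons h l => cases a <;> cases b <;> cases h <;> simp [count01_cons_cons] <;> omega

variable {l₁ l₂ : List Bool}

/- Both sublist bounds are proved with an arbitrary first letter `a` so that the induction
can see the pair formed with the next letter; `count01_true_cons` then removes it. -/

theorem Sublist.count01_cons_le (h : l₁ <+ l₂) (a : Bool) :
    count01 (a :: l₁) ≤ count01 (a :: l₂) := by
  induction h generalizing a with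
  | slnil => rfl
  | cons b _ ih => exact (ih a).trans (count01_cons_le_cons_cons a b _)
  | cons_cons b _ ih =>
    rw [count01_cons_cons, count01_cons_cons]
    exact Nat.add_le_add_left (ih b) _

theorem Sublist.count01_cons_le_add (h : l₁ <+ l₂) (a : Bool) :
    count01 (a :: l₂) ≤ count01 (a :: l₁) + (l₂.length - l₁.length) := by
  induction h generalizing a with
  | slnil => simp
  | @cons l₁ l₂ b hsub ih =>
    have := count01_cons_cons_le_cons_add_one a b l₂
    have := ih a
    have := hsub.length_le
    rw [length_cons]
    omega
  | cons_cons b _ ih =>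
    rw [count01_cons_cons, count01_cons_cons, length_cons, length_cons]
    have := ih b
    omega

theorem Sublist.count01_le (h : l₁ <+ l₂) : count01 l₁ ≤ count01 l₂ := by
  simpa only [count01_true_cons] using h.count01_cons_le true

theorem Sublist.count01_le_add (h : l₁ <+ l₂) :
    count01 l₂ ≤ count01 l₁ + (l₂.length - l₁.length) := by
  simpa only [count01_true_cons] using h.count01_cons_le_add true

end List

theorem stmt12 (n : ℕ) (c c' : List Bool)
    (hc : c.length = n) (hc' : c'.length = n)
    (h : ∃ e : List Bool, e.length = n - 2 ∧ e.Sublist c ∧ e.Sublist c')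
    (hmod : (ind01 c).count true ≡ (ind01 c').count true [MOD 3]) :
    (ind01 c).count true = (ind01 c').count true := by
  obtain ⟨e, he, hec, hec'⟩ := h
  have lo := hec.count01_le
  have lo' := hec'.count01_le
  have hi := hec.count01_le_add
  have hi' := hec'.count01_le_add
  rw [hc, he] at hi
  rw [hc', he] at hi'
  change c.count01 % 3 = c'.count01 % 3 at hmod
  change c.count01 = c'.count01
  omega
end

section
/- Let c, c' ∈ {0,1}^n share a common subsequence of length n-2. If 𝟙_{10}(c) = 𝟙_{10}(c') and 𝟙_{01}(c) = 𝟙_{01}(c'), then c = c'. -/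
@[simp] lemma ind10_cons_cons (a b : Bool) (l : List Bool) :
    ind10 (a :: b :: l) = (a && !b) :: ind10 (b :: l) := rfl

@[simp] lemma ind01_cons_cons (a b : Bool) (l : List Bool) :
    ind01 (a :: b :: l) = (!a && b) :: ind01 (b :: l) := rfl

lemma ind10_map_not (c : List Bool) : ind10 (c.map not) = ind01 c := by
  simp only [ind10, ind01, ← List.map_tail, List.zipWith_map, Bool.not_not]

lemma eq_or_eq_map_not_of_ind10_eq_of_ind01_eq {c c' : List Bool} (hl : c.length = c'.length)
    (h10 : ind10 c = ind10 c') (h01 : ind01 c = ind01 c') : c = c' ∨ c = c'.map not := by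
  induction c generalizing c' with
  | nil => simp_all [List.length_eq_zero_iff.mp hl.symm]
  | cons a t ih =>
    match t, c', hl with
    | [], [a'], _ => cases a <;> cases a' <;> simp
    | b :: u, a' :: b' :: u', hl =>
      simp only [ind10_cons_cons, ind01_cons_cons, List.cons.injEq] at h10 h01
      obtain ⟨ha10, ht10⟩ := h10
      obtain ⟨ha01, ht01⟩ := h01
      rcases ih (by simpa using hl) ht10 ht01 with h | h <;>
      · simp only [List.map_cons, List.cons.injEq] at h ⊢
        obtain ⟨hb, rfl⟩ := h
        cases a <;> cases a' <;> cases b <;> cases b' <;> simp at ha10 ha01 hb ⊢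

lemma eq_replicate_of_ind10_eq_ind01 {c : List Bool} (h : ind10 c = ind01 c) :
    ∃ v, c = List.replicate c.length v := by
  induction c with
  | nil => exact ⟨true, rfl⟩
  | cons a t ih =>
    match t, h, ih with
    | [], _, _ => exact ⟨a, rfl⟩
    | b :: u, h, ih =>
      simp only [ind10_cons_cons, ind01_cons_cons, List.cons.injEq] at h
      obtain ⟨v, hv⟩ := ih h.2
      have hab : a = b := by cases a <;> cases b <;> simp at h ⊢
      refine ⟨v, ?_⟩
      have hbv : b = v := List.eq_of_mem_replicate (hv ▸ List.mem_cons_self)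
      rw [List.length_cons, List.replicate_succ, ← hv, hab, hbv]

lemma List.eq_nil_of_sublist_replicate_of_sublist_replicate {α : Type*} {e : List α} {a b : α}
    {m n : ℕ} (hab : a ≠ b) (ha : e.Sublist (List.replicate m a))
    (hb : e.Sublist (List.replicate n b)) : e = [] := by
  refine eq_nil_iff_forall_not_mem.mpr fun x hx => hab ?_
  exact (eq_of_mem_replicate (ha.subset hx)).symm.trans (eq_of_mem_replicate (hb.subset hx))

theorem stmt13 (n : ℕ) (c c' : List Bool) (hn : 3 ≤ n)
    (hc : c.length = n) (hc' : c'.length = n)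
    (h : ∃ e : List Bool, e.length = n - 2 ∧ e.Sublist c ∧ e.Sublist c')
    (h10 : ind10 c = ind10 c') (h01 : ind01 c = ind01 c') :
    c = c' := by
  obtain ⟨e, he, hec, hec'⟩ := h
  refine (eq_or_eq_map_not_of_ind10_eq_of_ind01_eq (hc.trans hc'.symm) h10 h01).resolve_right ?_
  rintro rfl
  obtain ⟨v, hv⟩ := eq_replicate_of_ind10_eq_ind01 (c := c') (by rw [← ind10_map_not, h10])
  rw [hv, List.map_replicate] at hec
  rw [hv] at hec'
  have := List.eq_nil_of_sublist_replicate_of_sublist_replicate (Bool.not_ne_self v) hec hec'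
  simp only [this, List.length_nil] at he
  omega
end

section
/- Let c ∈ {0,1}^{n-1} with no two consecutive ones, and suppose c' ∈ {0,1}^{n-1} also has no two consecutive ones and shares a common subsequence of length n-2 with c (one deletion each). If c · (1,2,...,n-1) ≡ c' · (1,2,...,n-1) (mod 2n) and c · m^{(1)} ≡ c' · m^{(1)} (mod n²), where m^{(1)}_j = j(j+1)/2, then the positions of the single deletions k_1 ≤ k_2 satisfy c_{k_1} = ... = c_{k_2} = c'_{k_2}, forcing c = c'. -/
def m1 : ℕ → ℤ := fun j => (j : ℤ) * ((j : ℤ) + 1) / 2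

theorem stmt15 (n k1 k2 : ℕ) (c c' : ℕ → ℤ)
    (hn : 2 ≤ n)
    (hbc : ∀ t, 1 ≤ t → t ≤ n - 1 → c t = 0 ∨ c t = 1)
    (hbc' : ∀ t, 1 ≤ t → t ≤ n - 1 → c' t = 0 ∨ c' t = 1)
    (hnc : ∀ t, 1 ≤ t → t + 1 ≤ n - 1 → c t * c (t + 1) = 0)
    (hnc' : ∀ t, 1 ≤ t → t + 1 ≤ n - 1 → c' t * c' (t + 1) = 0)
    (hk1 : 1 ≤ k1) (hkk : k1 ≤ k2) (hk2 : k2 ≤ n - 1)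
    (hout : ∀ t, 1 ≤ t → t ≤ n - 1 → (t < k1 ∨ k2 < t) → c' t = c t)
    (hin : ∀ t, k1 ≤ t → t ≤ k2 - 1 → c' t = c (t + 1))
    (h0 : (∑ i ∈ Finset.Icc 1 (n - 1), c i * (i : ℤ)) ≡
      (∑ i ∈ Finset.Icc 1 (n - 1), c' i * (i : ℤ)) [ZMOD (2 * (n : ℤ))])
    (h1 : (∑ i ∈ Finset.Icc 1 (n - 1), c i * m1 i) ≡
      (∑ i ∈ Finset.Icc 1 (n - 1), c' i * m1 i) [ZMOD ((n : ℤ) ^ 2)]) :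
    ∀ t, 1 ≤ t → t ≤ n - 1 → c t = c' t := by
  -- Step 1: reduce the sum difference to a sum over [k1, k2]
  have hsub : Finset.Icc k1 k2 ⊆ Finset.Icc 1 (n - 1) := by
    intro x hx
    simp only [Finset.mem_Icc] at hx ⊢
    omega
  have hdiff : (∑ i ∈ Finset.Icc 1 (n - 1), c i * (i : ℤ)) -
      (∑ i ∈ Finset.Icc 1 (n - 1), c' i * (i : ℤ)) =
      ∑ i ∈ Finset.Icc k1 k2, (c i - c' i) * (i : ℤ) := by
    rw [← Finset.sum_sub_distrib]
    rw [← Finset.sum_subset hsub]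
    · apply Finset.sum_congr rfl
      intro i _; ring
    · intro x hx hnx
      simp only [Finset.mem_Icc] at hx hnx
      have : c' x = c x := hout x hx.1 hx.2 (by omega)
      rw [this]; ring
  -- Step 2: telescoping identity
  have hsplit : (∑ i ∈ Finset.Icc k1 k2, (c i - c' i) * (i : ℤ)) =
      c k1 * k1 + (∑ s ∈ Finset.Icc (k1+1) k2, c s) - c' k2 * k2 := by
    have e1 : (∑ i ∈ Finset.Icc k1 k2, c i * (i : ℤ)) =
        c k1 * k1 + ∑ s ∈ Finset.Icc (k1+1) k2, c s * (s : ℤ) := by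
      rw [Finset.Icc_eq_cons_Ioc hkk, Finset.sum_cons, ← Finset.Icc_add_one_left_eq_Ioc]
    have e2 : (∑ i ∈ Finset.Icc k1 k2, c' i * (i : ℤ)) =
        (∑ s ∈ Finset.Icc (k1+1) k2, c s * ((s : ℤ) - 1)) + c' k2 * k2 := by
      have hk2' : k2 = (k2 - 1) + 1 := by omega
      rw [hk2', Finset.sum_Icc_succ_top (by omega : k1 ≤ (k2-1)+1), ← hk2']
      congr 1
      have e3 : (∑ i ∈ Finset.Icc k1 (k2-1), c' i * (i : ℤ)) =
          ∑ i ∈ Finset.Icc k1 (k2-1), c (i+1) * (i : ℤ) := by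
        apply Finset.sum_congr rfl
        intro i hi
        simp only [Finset.mem_Icc] at hi
        rw [hin i hi.1 hi.2]
      rw [e3]
      apply Finset.sum_nbij' (fun i => i + 1) (fun j => j - 1)
      · intro i hi; simp only [Finset.mem_Icc] at hi ⊢; omega
      · intro j hj; simp only [Finset.mem_Icc] at hj ⊢; omega
      · intro i hi; omega
      · intro j hj; simp only [Finset.mem_Icc] at hj; omega
      · intro i hi
        push_cast
        ring
    rw [show (∑ i ∈ Finset.Icc k1 k2, (c i - c' i) * (i:ℤ)) =
        (∑ i ∈ Finset.Icc k1 k2, c i * (i:ℤ)) - ∑ i ∈ Finset.Icc k1 k2, c' i * (i:ℤ) by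
      rw [← Finset.sum_sub_distrib]; apply Finset.sum_congr rfl; intro i _; ring]
    rw [e1, e2]
    have combine : (∑ s ∈ Finset.Icc (k1+1) k2, c s * (s:ℤ)) -
        (∑ s ∈ Finset.Icc (k1+1) k2, c s * ((s:ℤ) - 1)) =
        ∑ s ∈ Finset.Icc (k1+1) k2, c s := by
      rw [← Finset.sum_sub_distrib]
      apply Finset.sum_congr rfl; intro s _; ring
    linarith [combine]
  -- Step 3: bounds on the pieces
  set σ : ℤ := ∑ s ∈ Finset.Icc (k1+1) k2, c s with hσ
  have hcb : ∀ s ∈ Finset.Icc (k1+1) k2, c s = 0 ∨ c s = 1 := by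
    intro s hs
    simp only [Finset.mem_Icc] at hs
    exact hbc s (by omega) (by omega)
  have hσ0 : 0 ≤ σ := by
    apply Finset.sum_nonneg
    intro s hs
    rcases hcb s hs with h | h <;> rw [h] <;> norm_num
  have hσ1 : σ ≤ (k2 : ℤ) - k1 := by
    calc σ ≤ ∑ s ∈ Finset.Icc (k1+1) k2, (1 : ℤ) := by
            apply Finset.sum_le_sum
            intro s hs
            rcases hcb s hs with h | h <;> rw [h] <;> norm_num
      _ = (Finset.Icc (k1+1) k2).card • (1:ℤ) := by rw [Finset.sum_const]
      _ = (k2 : ℤ) - k1 := by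
            rw [Nat.card_Icc, nsmul_eq_mul, mul_one]
            omega
  have ha := hbc k1 hk1 (by omega)
  have hb := hbc' k2 (by omega) hk2
  -- Step 4: the difference is 0
  have hdvd : (2 * (n : ℤ)) ∣ (c k1 * k1 + σ - c' k2 * k2) := by
    have := (Int.ModEq.dvd h0)
    rw [show (∑ i ∈ Finset.Icc 1 (n - 1), c' i * (i : ℤ)) -
        (∑ i ∈ Finset.Icc 1 (n - 1), c i * (i : ℤ)) =
        -((∑ i ∈ Finset.Icc 1 (n - 1), c i * (i : ℤ)) -
        (∑ i ∈ Finset.Icc 1 (n - 1), c' i * (i : ℤ))) by ring] at this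
    rw [hdiff, hsplit] at this
    exact (dvd_neg).mp this
  have hknk : (k2 : ℤ) ≤ (n : ℤ) - 1 := by
    have : (k2 : ℤ) ≤ ((n - 1 : ℕ) : ℤ) := by exact_mod_cast hk2
    push_cast [Nat.cast_sub (by omega : 1 ≤ n)] at this
    omega
  have hk1z : (1 : ℤ) ≤ (k1 : ℤ) := by exact_mod_cast hk1
  have hkkz : (k1 : ℤ) ≤ (k2 : ℤ) := by exact_mod_cast hkk
  have hnz : (2 : ℤ) ≤ (n : ℤ) := by exact_mod_cast hn
  have hD0 : c k1 * k1 + σ - c' k2 * k2 = 0 := by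
    apply Int.eq_zero_of_abs_lt_dvd hdvd
    rw [abs_lt]
    constructor
    · rcases ha with h | h <;> rcases hb with h' | h' <;>
        rw [h, h'] <;> nlinarith
    · rcases ha with h | h <;> rcases hb with h' | h' <;>
        rw [h, h'] <;> nlinarith
  -- Step 5: case analysis
  rcases hb with hb0 | hb1
  · -- c' k2 = 0 : everything in [k1,k2] is 0
    rw [hb0] at hD0
    have hca : c k1 = 0 := by
      rcases ha with h | h
      · exact h
      · exfalso; rw [h] at hD0; nlinarith
    have hσz : σ = 0 := by rw [hca] at hD0; linarith
    have hzero : ∀ s ∈ Finset.Icc (k1+1) k2, c s = 0 := by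
      have := (Finset.sum_eq_zero_iff_of_nonneg (by
        intro s hs; rcases hcb s hs with h | h <;> rw [h] <;> norm_num)).mp hσz
      exact this
    intro t ht1 ht2
    rcases Nat.lt_or_ge t k1 with h | h
    · exact (hout t ht1 ht2 (Or.inl h)).symm
    rcases Nat.lt_or_ge k2 t with h' | h'
    · exact (hout t ht1 ht2 (Or.inr h')).symm
    -- k1 ≤ t ≤ k2
    have hct : c t = 0 := by
      rcases Nat.eq_or_lt_of_le h with he | hl
      · rw [← he]; exact hca
      · exact hzero t (by simp only [Finset.mem_Icc]; omega)
    have hct' : c' t = 0 := by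
      rcases Nat.eq_or_lt_of_le h' with he | hl
      · rw [he]; exact hb0
      · rw [hin t h (by omega)]
        exact hzero (t+1) (by simp only [Finset.mem_Icc]; omega)
    rw [hct, hct']
  · -- c' k2 = 1
    rw [hb1] at hD0
    have hca : c k1 = 1 := by
      rcases ha with h | h
      · exfalso; rw [h] at hD0
        nlinarith
      · exact h
    rw [hca] at hD0
    have hσeq : σ = (k2 : ℤ) - k1 := by linarith
    have hsum0 : ∑ s ∈ Finset.Icc (k1+1) k2, ((1:ℤ) - c s) = 0 := by
      rw [Finset.sum_sub_distrib, Finset.sum_const, nsmul_eq_mul, mul_one,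
        Nat.card_Icc, ← hσ]
      have hcast : ((k2 + 1 - (k1+1) : ℕ) : ℤ) = (k2:ℤ) - k1 := by omega
      rw [hcast, hσeq]; ring
    have hones : ∀ s ∈ Finset.Icc (k1+1) k2, c s = 1 := by
      intro s hs
      have := (Finset.sum_eq_zero_iff_of_nonneg (by
        intro x hx; rcases hcb x hx with h | h <;> rw [h] <;> norm_num)).mp hsum0 s hs
      linarith
    have hkeq : k1 = k2 := by
      by_contra hne
      have hlt : k1 < k2 := lt_of_le_of_ne hkk hne
      have h1m : c (k1+1) = 1 := hones (k1+1) (by simp only [Finset.mem_Icc]; omega)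
      have := hnc k1 hk1 (by omega)
      rw [hca, h1m] at this
      norm_num at this
    intro t ht1 ht2
    rcases Nat.lt_or_ge t k1 with h | h
    · exact (hout t ht1 ht2 (Or.inl h)).symm
    rcases Nat.lt_or_ge k2 t with h' | h'
    · exact (hout t ht1 ht2 (Or.inr h')).symm
    have ht : t = k1 := by omega
    rw [← hkeq] at hb1
    rw [ht, hca, hb1]
end

section
/- The Varshamov–Tenengolts code {c ∈ {0,1}^n : Σ_{i=1}^n i·c_i ≡ 0 (mod n+1)} corrects a single deletion: if c, c' are both in this set and share a common subsequence of length n-1, then c = c'. -/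
/-!
Write `c = a ++ x :: b` and `c' = a' ++ y :: b'` with `a ++ b = a' ++ b'` the common subsequence.
Inserting `x` after `a` raises the sum by `w = (|a| + 1)·x + #{ones in b}`, a number in `[0, n]`;
so both codewords force the same weight `w`. If `a` is a prefix of `a'`, with `a' = a ++ m`, equal
weights leave only two possibilities: `x = y = 0` and `m` has no ones, or `x = y = 1` and `m` has
no zeros. Either way `x :: m = m ++ [y]`, i.e. the two insertions produce the same word.
-/

def vtSum (c : List Bool) : ℕ :=
  ∑ i ∈ Finset.range c.length, (i + 1) * (if c.getD i false then 1 else 0)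

def insertionWeight (a b : List Bool) (x : Bool) : ℕ :=
  (a.length + 1) * (if x then 1 else 0) + b.count true

lemma count_true_eq_sum (l : List Bool) :
    l.count true = ∑ i ∈ Finset.range l.length, (if l.getD i false then 1 else 0) := by
  induction l with
  | nil => simp
  | cons x t ih =>
    rw [List.count_cons, List.length_cons, Finset.sum_range_succ', ih]
    cases x <;> simp [add_comm]

lemma vtSum_cons (x : Bool) (l : List Bool) :
    vtSum (x :: l) = (if x then 1 else 0) + vtSum l + l.count true := by
  simp only [vtSum, List.length_cons, Finset.sum_range_succ', List.getD_cons_succ,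
    List.getD_cons_zero, count_true_eq_sum, add_mul, one_mul, Finset.sum_add_distrib]
  ring

lemma vtSum_append_cons (a b : List Bool) (x : Bool) :
    vtSum (a ++ x :: b) = vtSum (a ++ b) + insertionWeight a b x := by
  induction a with
  | nil => cases x <;> simp [vtSum_cons, insertionWeight]; ring
  | cons h t ih =>
    simp only [insertionWeight, List.cons_append, vtSum_cons, ih, List.count_append,
      List.count_cons, List.length_cons]
    cases x <;> simp <;> ring

lemma insertionWeight_le (a b : List Bool) (x : Bool) :
    insertionWeight a b x ≤ a.length + b.length + 1 := by
  have := List.count_le_length (a := true) (l := b)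
  unfold insertionWeight
  cases x <;> simp <;> omega

lemma List.Sublist.exists_eq_append_cons_of_length_eq_succ {α : Type*} {e c : List α}
    (h : e.Sublist c) (hlen : c.length = e.length + 1) :
    ∃ a x b, e = a ++ b ∧ c = a ++ x :: b := by
  induction h with
  | slnil => simp at hlen
  | cons x h _ =>
    exact ⟨[], x, _, by simp [h.eq_of_length (by simpa using hlen.symm)], rfl⟩
  | cons_cons x _ ih =>
    obtain ⟨a, y, b, rfl, rfl⟩ := ih (by simpa using hlen)
    exact ⟨x :: a, y, b, rfl, rfl⟩

lemma cons_eq_append_singleton_of_forall_eq {α : Type*} {m : List α} {x : α}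
    (h : ∀ b ∈ m, b = x) : x :: m = m ++ [x] := by
  rw [List.eq_replicate_iff.mpr ⟨rfl, h⟩, ← List.replicate_succ, List.replicate_succ']

lemma cons_eq_append_singleton_of_count {m : List Bool} {x y : Bool} {k : ℕ}
    (h : (k + 1) * (if x then 1 else 0) + m.count true
      = (k + m.length + 1) * (if y then 1 else 0)) :
    x :: m = m ++ [y] := by
  have hcount := List.count_le_length (a := true) (l := m)
  cases x <;> cases y <;>
    simp only [Bool.false_eq_true, ↓reduceIte, mul_zero, mul_one, zero_add] at h
  · refine cons_eq_append_singleton_of_forall_eq fun b hb => ?_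
    rw [List.count_eq_zero] at h
    simpa using ne_of_mem_of_not_mem hb h
  · omega
  · omega
  · have hall : m.count true = m.length := by omega
    exact cons_eq_append_singleton_of_forall_eq fun b hb => (List.count_eq_length.mp hall b hb).symm

lemma append_cons_eq_of_insertionWeight_eq {a b a' b' : List Bool} {x y : Bool}
    (hab : a ++ b = a' ++ b') (hw : insertionWeight a b x = insertionWeight a' b' y) :
    a ++ x :: b = a' ++ y :: b' := by
  wlog hle : a.length ≤ a'.length generalizing a b a' b' x y
  · exact (this hab.symm hw.symm (by omega)).symm
  obtain ⟨m, rfl, rfl⟩ : ∃ m, a' = a ++ m ∧ b = m ++ b' := by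
    obtain ⟨m, rfl⟩ := List.prefix_of_prefix_length_le ⟨b, rfl⟩ ⟨b', hab.symm⟩ hle
    exact ⟨m, rfl, by simpa using hab⟩
  have hxy : x :: m = m ++ [y] := by
    apply cons_eq_append_singleton_of_count (k := a.length)
    simpa [insertionWeight, List.count_append, ← add_assoc] using hw
  simp [← List.cons_append, hxy]

theorem stmt17 (n : ℕ) (c c' : List Bool)
    (hc : c.length = n) (hc' : c'.length = n)
    (hvt : vtSum c % (n + 1) = 0) (hvt' : vtSum c' % (n + 1) = 0)
    (h : ∃ e : List Bool, e.length = n - 1 ∧ e.Sublist c ∧ e.Sublist c') :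
    c = c' := by
  obtain ⟨e, he, hec, hec'⟩ := h
  rcases Nat.eq_zero_or_pos n with rfl | hn
  · rw [List.length_eq_zero_iff.mp hc, List.length_eq_zero_iff.mp hc']
  obtain ⟨a, x, b, rfl, rfl⟩ := hec.exists_eq_append_cons_of_length_eq_succ (by omega)
  obtain ⟨a', y, b', hab, rfl⟩ := hec'.exists_eq_append_cons_of_length_eq_succ (by omega)
  refine append_cons_eq_of_insertionWeight_eq hab ?_
  have hw : insertionWeight a b x ≤ n := by
    simpa [hc.symm, add_assoc] using insertionWeight_le a b x
  have hw' : insertionWeight a' b' y ≤ n := by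
    simpa [hc'.symm, add_assoc] using insertionWeight_le a' b' y
  rw [vtSum_append_cons] at hvt
  rw [vtSum_append_cons, ← hab] at hvt'
  have hmod : insertionWeight a b x ≡ insertionWeight a' b' y [MOD n + 1] :=
    Nat.ModEq.add_left_cancel' (vtSum (a ++ b)) (hvt.trans hvt'.symm)
  rwa [Nat.ModEq, Nat.mod_eq_of_lt (by omega), Nat.mod_eq_of_lt (by omega)] at hmod
end
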